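/- Let G be any group, f : G → Aut(G) a homomorphism, g : G → G a bijection with g(1) = 1 satisfying g(στ) = g(σ)·f(σ)(g(τ)) for all σ, τ ∈ G, and set N = {ρ(g(σ))∘f(σ) : σ ∈ G}. Let ι : G → G denote the inversion map ι(σ) = σ⁻¹ and put g₀ = ι∘g. Then N = g₀ λ(G) g₀⁻¹ as subgroups of Perm(G). Consequently, if π ∈ Perm(G) satisfies N = πλ(G)π⁻¹ and the normalizer of N in Perm(G) equals Hol(G), then π⁻¹∘g₀ ∈ Hol(G); in particular, if f is the trivial homomorphism then π⁻¹∘ι ∈ Hol(G), and if h defined by h(σ) = conj(g(σ))∘f(σ) is the trivial homomorphism then π ∈ Hol(G). -/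

import Mathlib

/-- The left regular representation `λ : G →* Perm G`, `λ(σ)(x) = σ·x`. -/
def lambda (G : Type*) [Group G] : G →* Equiv.Perm G where
  toFun σ := Equiv.mulLeft σ
  map_one' := by ext x; simp
  map_mul' σ τ := by ext x; simp [mul_assoc]

/-- The right regular representation `ρ : G →* Perm G`, `ρ(σ)(x) = x·σ⁻¹`. -/
def rho (G : Type*) [Group G] : G →* Equiv.Perm G where
  toFun σ := Equiv.mulRight σ⁻¹
  map_one' := by ext x; simp
  map_mul' σ τ := by ext x; simp [mul_assoc]

/-- The holomorph `Hol(G)`: the normalizer of `λ(G)` in `Perm G`. -/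
def Hol (G : Type*) [Group G] : Subgroup (Equiv.Perm G) :=
  Subgroup.normalizer ((lambda G).range : Set (Equiv.Perm G))

/-!
Write `g₀ = ι ∘ g`. The cocycle identity `g(σ · g⁻¹(x⁻¹)) = g(σ) · f(σ)(x⁻¹)` unwinds to
`g₀ λ(σ) g₀⁻¹ = ρ(g(σ)) ∘ f(σ)`, which is the equality `N = g₀ λ(G) g₀⁻¹`. If also
`N = π λ(G) π⁻¹`, then `π⁻¹ g₀` normalizes `λ(G)`. When `f` is trivial, `g` is an automorphism,
hence lies in `Hol(G)`, and so does `π⁻¹ ι = (π⁻¹ g₀) g⁻¹`. When `conj(g(σ)) ∘ f(σ)` is trivial,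
`ρ(g(σ)) ∘ f(σ) = λ(g(σ)⁻¹)`, so `g₀` normalizes `λ(G)` and `π = g₀ (π⁻¹ g₀)⁻¹ ∈ Hol(G)`.
-/

open Equiv Function

theorem Subgroup.inv_mul_mem_normalizer_of_conj_image_eq {P : Type*} [Group P] {s : Set P}
    {a b : P} (h : MulAut.conj a '' s = MulAut.conj b '' s) : a⁻¹ * b ∈ normalizer s := by
  rw [mem_normalizer_iff_conj_image_eq, map_mul, MulAut.coe_mul, Set.image_comp, ← h,
    ← Set.image_comp, ← MulAut.coe_mul, ← map_mul, inv_mul_cancel, map_one, MulAut.coe_one,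
    Set.image_id]

section Holomorph

variable {G : Type*} [Group G]

@[simp]
theorem MulAut.toPerm_eq_toEquiv (e : MulAut G) : MulAut.toPerm G e = e.toEquiv := rfl

theorem mem_Hol_of_conj_lambda_eq {c : Perm G} {φ : G → G} (hφ : Surjective φ)
    (h : ∀ σ, c * lambda G σ * c⁻¹ = lambda G (φ σ)) : c ∈ Hol G := by
  have hconj : MulAut.conj c ∘ lambda G = lambda G ∘ φ := funext h
  rw [Hol, Subgroup.mem_normalizer_iff_conj_image_eq, MonoidHom.coe_range, ← Set.range_comp,
    hconj, Set.range_comp, hφ.range_eq, Set.image_univ]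

theorem MulAut.toPerm_mem_Hol (e : MulAut G) : MulAut.toPerm G e ∈ Hol G :=
  mem_Hol_of_conj_lambda_eq e.surjective fun σ => by
    ext x
    simp [lambda]

theorem rho_mul_toPerm_conj_inv (τ : G) :
    rho G τ * MulAut.toPerm G (MulAut.conj τ)⁻¹ = lambda G τ⁻¹ := by
  ext x
  simp [lambda, rho, mul_assoc]

theorem conj_lambda_eq_rho_mul {f : G → MulAut G} {g : Perm G}
    (hrel : ∀ σ τ : G, g (σ * τ) = g σ * (f σ) (g τ)) (σ : G) :
    (Equiv.inv G * g) * lambda G σ * (Equiv.inv G * g)⁻¹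
      = rho G (g σ) * MulAut.toPerm G (f σ) := by
  ext x
  have hcocycle : g (σ * g.symm x⁻¹) = g σ * f σ x⁻¹ := by rw [hrel, g.apply_symm_apply]
  simp [lambda, rho, hcocycle]

end Holomorph

theorem N_eq_conj_lambda_by_g0_general
    (G : Type*) [Group G]
    (f : G →* MulAut G) (g : Equiv.Perm G)
    (hrel : ∀ σ τ : G, g (σ * τ) = g σ * (f σ) (g τ)) :
    -- `N = g₀ λ(G) g₀⁻¹`, where `g₀ = ι ∘ g`:
    ({q | ∃ σ : G, q = rho G (g σ) * MulAut.toPerm G (f σ)} : Set (Equiv.Perm G))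
        = (fun x => ((Equiv.inv G : Equiv.Perm G) * g) * x
            * ((Equiv.inv G : Equiv.Perm G) * g)⁻¹) '' ((lambda G).range : Set (Equiv.Perm G)) ∧
      -- consequently, for `π` with `N = πλ(G)π⁻¹` and `Norm(N) = Hol(G)`:
      ∀ π : Equiv.Perm G,
        (Subgroup.map (MulAut.conj π).toMonoidHom (lambda G).range : Set (Equiv.Perm G))
          = {q | ∃ σ : G, q = rho G (g σ) * MulAut.toPerm G (f σ)} →
        Subgroup.normalizer (Subgroup.map (MulAut.conj π).toMonoidHom (lambda G).range : Set (Equiv.Perm G)) = Hol G →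
        (π⁻¹ * ((Equiv.inv G : Equiv.Perm G) * g) ∈ Hol G ∧
          (f = 1 → π⁻¹ * (Equiv.inv G : Equiv.Perm G) ∈ Hol G) ∧
          ((∀ σ : G, MulAut.conj (g σ) * f σ = 1) → π ∈ Hol G)) := by
  have hN : {q | ∃ σ : G, q = rho G (g σ) * MulAut.toPerm G (f σ)}
      = MulAut.conj (Equiv.inv G * g) '' (lambda G).range := by
    rw [MonoidHom.coe_range, ← Set.range_comp]
    ext q
    simp only [Set.mem_ofPred_eq, Set.mem_range, comp_apply, MulAut.conj_apply,
      conj_lambda_eq_rho_mul hrel]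
    exact exists_congr fun _ => eq_comm
  refine ⟨hN, fun π hπ _ => ?_⟩
  have hπg₀ : π⁻¹ * (Equiv.inv G * g) ∈ Hol G :=
    Subgroup.inv_mul_mem_normalizer_of_conj_image_eq (by rw [← hN, ← hπ]; rfl)
  refine ⟨hπg₀, fun hf => ?_, fun hh => ?_⟩
  · have hg : g ∈ Hol G :=
      MulAut.toPerm_mem_Hol (MulEquiv.mk' g fun σ τ => by simp [hrel, hf])
    simpa [mul_assoc] using mul_mem hπg₀ (inv_mem hg)
  · have hg₀ : Equiv.inv G * g ∈ Hol G := by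
      refine mem_Hol_of_conj_lambda_eq (inv_surjective.comp g.surjective) fun σ => ?_
      rw [conj_lambda_eq_rho_mul hrel, eq_inv_of_mul_eq_one_right (hh σ),
        rho_mul_toPerm_conj_inv]
      rfl
    simpa [mul_assoc] using mul_mem hg₀ (inv_mem hπg₀)

/-- Let `G` be any group, `f : G →* Aut(G)`, `g` a bijection of `G`
with `g(1) = 1` and `g(στ) = g(σ)·f(σ)(g(τ))`, and set
`N = {ρ(g(σ))∘f(σ) : σ ∈ G}`. With `ι` the inversion map and `g₀ = ι∘g`, one has
`N = g₀ λ(G) g₀⁻¹` as subgroups of `Perm(G)`. Consequently, if `π ∈ Perm(G)`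
satisfies `N = πλ(G)π⁻¹` and the normalizer of `N` in `Perm(G)` equals `Hol(G)`,
then `π⁻¹∘g₀ ∈ Hol(G)`; in particular, if `f` is trivial then `π⁻¹∘ι ∈ Hol(G)`,
and if `h(σ) = conj(g(σ))∘f(σ)` is trivial then `π ∈ Hol(G)`. -/
theorem N_eq_conj_lambda_by_g0
    (G : Type*) [Group G]
    (f : G →* MulAut G) (g : Equiv.Perm G) (hg1 : g 1 = 1)
    (hrel : ∀ σ τ : G, g (σ * τ) = g σ * (f σ) (g τ)) :
    -- `N = g₀ λ(G) g₀⁻¹`, where `g₀ = ι ∘ g`: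
    ({q | ∃ σ : G, q = rho G (g σ) * MulAut.toPerm G (f σ)} : Set (Equiv.Perm G))
        = (fun x => ((Equiv.inv G : Equiv.Perm G) * g) * x
            * ((Equiv.inv G : Equiv.Perm G) * g)⁻¹) '' ((lambda G).range : Set (Equiv.Perm G)) ∧
      -- consequently, for `π` with `N = πλ(G)π⁻¹` and `Norm(N) = Hol(G)`:
      ∀ π : Equiv.Perm G,
        (Subgroup.map (MulAut.conj π).toMonoidHom (lambda G).range : Set (Equiv.Perm G))
          = {q | ∃ σ : G, q = rho G (g σ) * MulAut.toPerm G (f σ)} →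
        Subgroup.normalizer (Subgroup.map (MulAut.conj π).toMonoidHom (lambda G).range : Set (Equiv.Perm G)) = Hol G →
        (π⁻¹ * ((Equiv.inv G : Equiv.Perm G) * g) ∈ Hol G ∧
          (f = 1 → π⁻¹ * (Equiv.inv G : Equiv.Perm G) ∈ Hol G) ∧
          ((∀ σ : G, MulAut.conj (g σ) * f σ = 1) → π ∈ Hol G)) :=
  N_eq_conj_lambda_by_g0_general G f g hrel
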